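/- arXiv:1809.03148 — 9 statements merged into one kernel-verified Lean document; each statement's English description precedes it below -/
import Mathlib

section
/- In any implication semigroup (a semigroup S with a distinguished element ω satisfying xyz = zωxyzω² and ω³ = ω for all x,y,z ∈ S), the identity ω² = ω holds. -/
theorem stmt_0 {S : Type*} [Semigroup S] (ω : S)
    (h1 : ∀ x y z : S, x * y * z = z * ω * x * y * z * ω * ω)
    (h2 : ω * ω * ω = ω) :
    ω * ω = ω := by
  -- With x = y = ω and z = ω², the first identity reads ω⁴ = ω⁹, and ω³ = ω reduces this to ω² = ω.
  have h := h1 ω ω (ω * ω)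
  simp only [mul_assoc] at h h2 ⊢
  rwa [h2, h2, h2, h2] at h
end

section
/- In any implication semigroup, the identity x·y·z = x·y·z·ω holds for all x, y, z ∈ S. -/
/-!
Instantiating the first identity at `ω, ω, ω²` gives `ω⁴ = ω⁹ = ω`, while `ω³ = ω` gives `ω⁴ = ω²`,
so `ω` is idempotent. The first identity then says `p = (z ω) p ω` for `p = x y z`, and an element
of the form `a p e` with `e` idempotent is fixed by right multiplication by `e`.
-/

theorem IsIdempotentElem.mul_eq_self_of_eq_mul_mul {S : Type*} [Semigroup S] {e a p : S}
    (he : IsIdempotentElem e) (h : p = a * p * e) : p * e = p := by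
  rw [h, mul_assoc, he.eq]

theorem isIdempotentElem_of_implication_identities {S : Type*} [Semigroup S] {ω : S}
    (h1 : ∀ x y z : S, x * y * z = z * ω * x * y * z * ω * ω) (h2 : ω * ω * ω = ω) :
    IsIdempotentElem ω := by
  have h2' : ω * (ω * ω) = ω := by rw [← mul_assoc, h2]
  calc ω * ω = ω * ω * ω * ω := by rw [h2]
    _ = ω * ω * (ω * ω) := mul_assoc _ _ _
    _ = ω * ω * ω * ω * ω * (ω * ω) * ω * ω := h1 ω ω (ω * ω)
    _ = ω := by simp only [mul_assoc, h2']

theorem stmt_2 {S : Type*} [Semigroup S] (ω : S)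
    (h1 : ∀ x y z : S, x * y * z = z * ω * x * y * z * ω * ω)
    (h2 : ω * ω * ω = ω) :
    ∀ x y z : S, x * y * z = x * y * z * ω := by
  intro x y z
  have hω : IsIdempotentElem ω := isIdempotentElem_of_implication_identities h1 h2
  refine (hω.mul_eq_self_of_eq_mul_mul (a := z * ω) ?_).symm
  calc x * y * z = z * ω * x * y * z * ω * ω := h1 x y z
    _ = z * ω * (x * y * z) * (ω * ω) := by simp only [mul_assoc]
    _ = z * ω * (x * y * z) * ω := by rw [hω.eq]
end

section
/- In any implication semigroup, the distinguished element ω is a central idempotent: ω·ω = ω and ω·x = x·ω for all x ∈ S. -/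
namespace ImplicationSemigroup

variable {S : Type*} [Semigroup S] {ω : S}

theorem mul_self_eq_self (h : ∀ x y z : S, x * y * z = z * ω * x * y * z * ω * ω)
    (hω : ω * ω * ω = ω) : ω * ω = ω := by
  have hω' : ω * (ω * ω) = ω := by rw [← mul_assoc, hω]
  simpa only [mul_assoc, hω'] using h (ω * ω) (ω * ω) (ω * ω)

theorem mul_omega_eq_omega_mul_mul_omega
    (h : ∀ x y z : S, x * y * z = z * ω * x * y * z * ω * ω) (hω : ω * ω = ω) (z : S) :
    z * ω = ω * z * ω := by
  simpa only [mul_assoc, hω, ← mul_assoc ω ω] using h z ω ω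

theorem omega_mul_eq_mul_omega_mul_self
    (h : ∀ x y z : S, x * y * z = z * ω * x * y * z * ω * ω) (hω : ω * ω = ω) (z : S) :
    ω * z = z * ω * (z * ω) := by
  simpa only [mul_assoc, hω, ← mul_assoc ω ω] using h ω ω z

theorem omega_mul_comm (h : ∀ x y z : S, x * y * z = z * ω * x * y * z * ω * ω)
    (hω : ω * ω = ω) (z : S) : ω * z = z * ω := by
  set a := z * ω
  have ha_omega : a * ω = a := by rw [mul_assoc, hω]
  have omega_ha : ω * a = a :=
    (mul_assoc ω z ω).symm.trans (mul_omega_eq_omega_mul_mul_omega h hω z).symm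
  -- `a` is fixed by `ω` on both sides, so `ω * a = a * ω * (a * ω)` collapses to `a = a * a`.
  calc ω * z = a * a := omega_mul_eq_mul_omega_mul_self h hω z
    _ = ω * a := by rw [omega_mul_eq_mul_omega_mul_self h hω a, ha_omega]
    _ = a := omega_ha

end ImplicationSemigroup

theorem stmt_3 {S : Type*} [Semigroup S] (ω : S)
    (h1 : ∀ x y z : S, x * y * z = z * ω * x * y * z * ω * ω)
    (h2 : ω * ω * ω = ω) :
    ω * ω = ω ∧ ∀ x : S, ω * x = x * ω := by
  have hω := ImplicationSemigroup.mul_self_eq_self h1 h2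
  exact ⟨hω, ImplicationSemigroup.omega_mul_comm h1 hω⟩
end

section
/- An implication semigroup S satisfies ω·x = x·ω = x for all x ∈ S (i.e., ω is an identity element) if and only if S satisfies x·x = x for all x ∈ S (i.e., S is a band). -/
/-! In a band, the instance `x x x = x ω x x x ω ω` of the defining identity collapses to
`x = (x ω)²`, so `x ω = x`; then `ω ω x = x ω ω ω x ω ω` collapses to `ω x = x`.
Conversely, when `ω` is an identity the instance `ω ω x = x ω ω ω x ω ω` reads `x = x x`. -/

section ImplicationSemigroup

variable {S : Type*} [Semigroup S] {ω : S}
  (h1 : ∀ x y z : S, x * y * z = z * ω * x * y * z * ω * ω)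
include h1

theorem mul_self_of_omega_identity (hω : ∀ x : S, ω * x = x ∧ x * ω = x) (x : S) : x * x = x := by
  simpa only [(hω _).1, (hω _).2] using (h1 ω ω x).symm

theorem mul_omega_of_band (hb : ∀ x : S, x * x = x) (x : S) : x * ω = x := by
  have hb_left : ∀ a b : S, a * (a * b) = a * b := fun a b => by rw [← mul_assoc, hb]
  calc x * ω = x * ω * (x * ω) := (hb _).symm
    _ = x * ω * x * x * x * ω * ω := by simp only [mul_assoc, hb_left, hb ω]
    _ = x := by rw [← h1, hb, hb]

theorem omega_mul_of_band (hb : ∀ x : S, x * x = x) (x : S) : ω * x = x :=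
  calc ω * x = ω * ω * x := by rw [hb]
    _ = x * ω * ω * ω * x * ω * ω := h1 ω ω x
    _ = x := by simp only [mul_omega_of_band h1 hb, hb]

end ImplicationSemigroup

theorem stmt_6_general {S : Type*} [Semigroup S] (ω : S)
    (h1 : ∀ x y z : S, x * y * z = z * ω * x * y * z * ω * ω) :
    (∀ x : S, ω * x = x ∧ x * ω = x) ↔ (∀ x : S, x * x = x) :=
  ⟨mul_self_of_omega_identity h1, fun hb x => ⟨omega_mul_of_band h1 hb x, mul_omega_of_band h1 hb x⟩⟩

theorem stmt_6 {S : Type*} [Semigroup S] (ω : S)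
    (h1 : ∀ x y z : S, x * y * z = z * ω * x * y * z * ω * ω)
    (h2 : ω * ω * ω = ω) :
    (∀ x : S, ω * x = x ∧ x * ω = x) ↔ (∀ x : S, x * x = x) :=
  stmt_6_general ω h1
end

section
/- In any implication semigroup, the identity x·y·x = y·x·ω holds for all x, y ∈ S. -/
/-!
The law `ω³ = ω` together with the defining law at `x = y = ω`, `z = ω²` forces `ω² = ω`, so the
defining law becomes `x y z = z ω x y z ω`. Hence every product of three factors absorbs `ω` on
the right, `y x ω = ω y x ω = ω y x`, and `ω y x = x ω y x ω = x y x ω = x y x`.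
-/

structure IsImplicationSemigroup {S : Type*} [Semigroup S] (ω : S) : Prop where
  mul_mul_eq : ∀ x y z : S, x * y * z = z * ω * x * y * z * ω * ω
  mul_mul_self : ω * ω * ω = ω

namespace IsImplicationSemigroup

variable {S : Type*} [Semigroup S] {ω : S} (h : IsImplicationSemigroup ω)
include h

theorem mul_self : ω * ω = ω := by
  have key := h.mul_mul_eq ω ω (ω * ω)
  simp only [← mul_assoc, h.mul_mul_self] at key
  exact key

theorem mul_self_mul (a : S) : ω * (ω * a) = ω * a := by
  rw [← mul_assoc, h.mul_self]

theorem mul_mul_eq_reduced (x y z : S) : x * y * z = z * ω * x * y * z * ω := by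
  rw [h.mul_mul_eq, mul_assoc _ ω ω, h.mul_self]

theorem mul_mul_mul_absorb (x y z : S) : x * y * z * ω = x * y * z := by
  conv_lhs => rw [h.mul_mul_eq_reduced x y z]
  rw [mul_assoc _ ω ω, h.mul_self, ← h.mul_mul_eq_reduced]

theorem mul_mul_ω_eq (x y : S) : x * y * ω = ω * x * y := by
  calc x * y * ω = ω * x * y * ω := by
        simpa only [mul_assoc, h.mul_self, h.mul_self_mul] using h.mul_mul_eq_reduced x y ω
    _ = ω * x * y := h.mul_mul_mul_absorb ω x y

theorem ω_mul_mul_eq (x y : S) : ω * x * y = y * x * y := by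
  calc ω * x * y = y * (ω * x * y * ω) := by
        simpa only [mul_assoc, h.mul_self] using h.mul_mul_eq_reduced ω x y
    _ = y * (x * y * ω) := by rw [h.mul_mul_mul_absorb, h.mul_mul_ω_eq]
    _ = y * x * y := by rw [← mul_assoc, ← mul_assoc, h.mul_mul_mul_absorb]

end IsImplicationSemigroup

theorem stmt_8 {S : Type*} [Semigroup S] (ω : S)
    (h1 : ∀ x y z : S, x * y * z = z * ω * x * y * z * ω * ω)
    (h2 : ω * ω * ω = ω) :
    ∀ x y : S, x * y * x = y * x * ω := by
  intro x y
  have h : IsImplicationSemigroup ω := ⟨h1, h2⟩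
  rw [h.mul_mul_ω_eq, h.ω_mul_mul_eq]
end

section
/- In any implication semigroup, the identity x·x·y = x·y·ω holds for all x, y ∈ S. -/
theorem stmt_9 {S : Type*} [Semigroup S] (ω : S)
    (h1 : ∀ x y z : S, x * y * z = z * ω * x * y * z * ω * ω)
    (h2 : ω * ω * ω = ω) :
    ∀ x y : S, x * x * y = x * y * ω := by
  have Lv : ∀ a b c v : S,
      a * (b * (c * v)) = c * (ω * (a * (b * (c * (ω * (ω * v)))))) := by
    intro a b c v
    have h := congrArg (· * v) (h1 a b c)
    simpa only [mul_assoc] using h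
  have Le : ∀ a b c : S, a * (b * c) = c * (ω * (a * (b * (c * (ω * ω))))) := by
    intro a b c
    simpa only [mul_assoc] using h1 a b c
  intro x y
  calc x * x * y = x * (x * (y)) := by simp only [mul_assoc]
    _ = x * (x * y) := by simp only [mul_assoc]
    _ = y * (ω * (x * (x * (y * (ω * ω))))) := by rw [Le x x y]
    _ = y * (ω * (x * (x * (y * (ω * (ω)))))) := by simp only [mul_assoc]
    _ = y * (ω * (x * (x * (y * (ω * (ω)))))) := by simp only [mul_assoc]
    _ = y * (ω * (x * (ω * (ω * (x * (y * (ω * (ω * (ω * (ω)))))))))) := by rw [Lv x y ω (ω)]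
    _ = y * (ω * (x * (ω * (ω * (x * (y * (ω * (ω * (ω * (ω)))))))))) := by simp only [mul_assoc]
    _ = y * (ω * (x * (ω * ((ω * (x)) * (y * (ω * (ω * (ω * (ω))))))))) := by simp only [mul_assoc]
    _ = y * (ω * (x * (y * (ω * (ω * ((ω * (x)) * (y * (ω * (ω * (ω * (ω * (ω * (ω))))))))))))) := by rw [Lv ω (ω * (x)) y (ω * (ω * (ω * (ω))))]
    _ = y * (ω * (x * (y * (ω * (ω * (ω * (x * (y * (ω * (ω * (ω * (ω * (ω * (ω)))))))))))))) := by simp only [mul_assoc]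
    _ = y * (ω * ((x * (y)) * (ω * (ω * (ω * ((x * (y)) * (ω * (ω * (ω * (ω * (ω * (ω)))))))))))) := by simp only [mul_assoc]
    _ = y * (ω * (ω * (ω * ((x * (y)) * (ω * (ω * (ω * (ω)))))))) := by rw [← Lv ω ω (x * (y)) (ω * (ω * (ω * (ω))))]
    _ = y * (ω * (ω * (ω * (x * (y * (ω * (ω * (ω * (ω))))))))) := by simp only [mul_assoc]
    _ = y * (ω * (ω * (ω * (x * (y * (ω * (ω * (ω * (ω))))))))) := by simp only [mul_assoc]
    _ = y * (ω * (ω * (ω * (x * (y * ((ω * (ω)) * (ω * (ω * (ω * ((ω * (ω)) * (ω * ω))))))))))) := by rw [Le ω ω (ω * (ω))]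
    _ = y * (ω * (ω * (ω * (x * (y * (ω * (ω * (ω * (ω * (ω * (ω * (ω * (ω * (ω)))))))))))))) := by simp only [mul_assoc]
    _ = y * (ω * (ω * (ω * (x * (y * (ω * (ω * (ω * (ω * (ω * (ω * (ω * (ω * (ω)))))))))))))) := by simp only [mul_assoc]
    _ = y * (ω * (ω * (ω * (x * (y * (ω * (ω * (ω * (ω * (ω)))))))))) := by rw [← Lv ω ω ω (ω * (ω))]
    _ = y * (ω * (ω * (ω * (x * (y * (ω * (ω * (ω * (ω * (ω)))))))))) := by simp only [mul_assoc]
    _ = y * (ω * (ω * ((ω * (x)) * (y * (ω * (ω * (ω * (ω * (ω))))))))) := by simp only [mul_assoc]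
    _ = ω * ((ω * (x)) * (y * (ω * (ω * (ω))))) := by rw [← Lv ω (ω * (x)) y (ω * (ω * (ω)))]
    _ = ω * (ω * (x * (y * (ω * (ω * (ω)))))) := by simp only [mul_assoc]
    _ = ω * (ω * (x * (y * (ω * (ω * ω))))) := by simp only [mul_assoc]
    _ = x * (y * ω) := by rw [← Le x y ω]
    _ = x * (y * (ω)) := by simp only [mul_assoc]
    _ = x * y * ω := by simp only [mul_assoc]
end

section
/- Every implication semigroup S is a subdirect product of a band with identity element ω (namely ωS) and a 3-nilpotent semigroup (namely the Rees quotient S/ωS, which satisfies xyz = 0); concretely, ωS is a band with identity ω, and in S/ωS the product of any three elements equals the zero element. -/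
theorem stmt_11 {S : Type*} [Semigroup S] (ω : S)
    (h1 : ∀ x y z : S, x * y * z = z * ω * x * y * z * ω * ω)
    (h2 : ω * ω * ω = ω) :
    (∀ x : S, (ω * x) * (ω * x) = ω * x) ∧
    (∀ x : S, ω * (ω * x) = ω * x ∧ (ω * x) * ω = ω * x) ∧
    (∀ x y z : S, x * y * z ∈ {w : S | ∃ v : S, w = ω * v}) ∧
    (∀ x y : S, ω * x = ω * y →
      (x = y ∨ ((∃ v : S, x = ω * v) ∧ (∃ v : S, y = ω * v))) → x = y) := by
  simp only [mul_assoc] at h1 h2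
  -- ω is idempotent
  have hω : ω * ω = ω := by
    have h := h1 ω ω (ω * ω)
    simp only [mul_assoc, h2] at h
    exact h
  have hω' : ∀ t : S, ω * (ω * t) = ω * t := by
    intro t; rw [← mul_assoc, hω]
  -- x*ω = ω*(x*ω)
  have hxω : ∀ x : S, x * ω = ω * (x * ω) := by
    intro x
    have h := h1 x ω ω
    simpa [hω, hω'] using h
  -- ω*z = z*(ω*(z*ω))
  have hωz : ∀ z : S, ω * z = z * (ω * (z * ω)) := by
    intro z
    have h := h1 ω ω z
    simpa [hω, hω'] using h
  -- ω*z*ω = ω*z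
  have hfix : ∀ z : S, ω * z * ω = ω * z := by
    intro z
    calc ω * z * ω = z * (ω * (z * ω)) * ω := by rw [← hωz]
      _ = z * (ω * (z * (ω * ω))) := by simp [mul_assoc]
      _ = z * (ω * (z * ω)) := by rw [hω]
      _ = ω * z := (hωz z).symm
  -- ω is central
  have hc : ∀ x : S, ω * x = x * ω := by
    intro x
    calc ω * x = ω * x * ω := (hfix x).symm
      _ = ω * (x * ω) := by rw [mul_assoc]
      _ = x * ω := (hxω x).symm
  -- ω*x = ω*(x*x)
  have hsq : ∀ x : S, ω * x = ω * (x * x) := by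
    intro x
    calc ω * x = x * (ω * (x * ω)) := hωz x
      _ = x * (ω * (ω * x)) := by rw [← hc]
      _ = x * (ω * x) := by rw [hω']
      _ = x * ω * x := by rw [mul_assoc]
      _ = ω * x * x := by rw [← hc]
      _ = ω * (x * x) := by rw [mul_assoc]
  refine ⟨?_, ?_, ?_, ?_⟩
  · intro x
    calc (ω * x) * (ω * x) = ω * (x * ω * x) := by simp [mul_assoc]
      _ = ω * (ω * x * x) := by rw [← hc]
      _ = ω * (ω * (x * x)) := by rw [mul_assoc]
      _ = ω * (x * x) := by rw [hω']
      _ = ω * x := (hsq x).symm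
  · intro x
    constructor
    · exact hω' x
    · rw [mul_assoc, ← hc x, ← mul_assoc, hω]
  · intro x y z
    refine ⟨z * (x * (y * (z * ω))), ?_⟩
    show x * y * z = _
    calc x * y * z = x * (y * z) := by rw [mul_assoc]
      _ = z * (ω * (x * (y * (z * (ω * ω))))) := h1 x y z
      _ = z * (ω * (x * (y * (z * ω)))) := by rw [hω]
      _ = z * ω * (x * (y * (z * ω))) := by rw [mul_assoc]
      _ = ω * z * (x * (y * (z * ω))) := by rw [← hc]
      _ = ω * (z * (x * (y * (z * ω)))) := by rw [mul_assoc]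
  · intro x y hxy hcase
    rcases hcase with h | ⟨⟨u, hu⟩, ⟨v, hv⟩⟩
    · exact h
    · have hx : ω * x = x := by rw [hu, ← mul_assoc, hω]
      have hy : ω * y = y := by rw [hv, ← mul_assoc, hω]
      rw [← hx, ← hy, hxy]
end

section
/- In any implication semigroup satisfying the band identity x·x = x, the identity x·y·x = y·x holds for all x, y ∈ S. -/
theorem stmt_12 {S : Type*} [Semigroup S] (ω : S)
    (h1 : ∀ x y z : S, x * y * z = z * ω * x * y * z * ω * ω)
    (h2 : ω * ω * ω = ω)
    (hband : ∀ x : S, x * x = x) :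
    ∀ x y : S, x * y * x = y * x := by
  have hee : ω * ω = ω := hband ω
  have hb2 : ∀ x y : S, x * (x * y) = x * y := by
    intro x y; rw [← mul_assoc, hband]
  -- key : a*b = b*(ω*(a*(b*ω)))
  have key : ∀ a b : S, a * b = b * (ω * (a * (b * ω))) := by
    intro a b
    have h := h1 a b b
    simp only [mul_assoc] at h
    rw [hband, hb2, hee] at h
    exact h
  -- x*ω = ω*(x*ω)
  have xe : ∀ x : S, x * ω = ω * (x * ω) := by
    intro x
    have h := key x ω
    rw [hb2, hee] at h
    exact h
  -- ω*x = x*(ω*(x*ω))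
  have ex : ∀ x : S, ω * x = x * (ω * (x * ω)) := by
    intro x
    have h := key ω x
    rw [hb2] at h
    exact h
  -- x*(ω*x) = ω*x
  have xox : ∀ x : S, x * (ω * x) = ω * x := by
    intro x
    calc x * (ω * x) = x * (x * (ω * (x * ω))) := by rw [← ex]
    _ = x * (ω * (x * ω)) := hb2 _ _
    _ = ω * x := (ex x).symm
  -- ω*x = x*ω
  have comm : ∀ x : S, ω * x = x * ω := by
    intro x
    calc ω * x = x * (ω * (x * ω)) := ex x
    _ = (x * (ω * x)) * ω := by simp only [mul_assoc]
    _ = (ω * x) * ω := by rw [xox]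
    _ = ω * (x * ω) := by rw [mul_assoc]
    _ = x * ω := (xe x).symm
  intro x y
  calc x * y * x = x * (ω * (x * y * (x * ω))) := key (x * y) x
  _ = (x * (ω * x)) * (y * (x * ω)) := by simp only [mul_assoc]
  _ = (ω * x) * (y * (x * ω)) := by rw [xox]
  _ = (x * ω) * (y * (x * ω)) := by rw [comm]
  _ = x * (ω * (y * (x * ω))) := by rw [mul_assoc]
  _ = y * x := (key y x).symm
end

section
/- A variety of implication zroupoids fails to contain the two-element algebra 2_b if and only if it satisfies the identity 0 = 0' (i.e., 0 = 0 → 0). Equivalently: an implication zroupoid A contains a subalgebra isomorphic to 2_b if and only if 0 ≠ 0 → 0 in A. -/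
/-!
Put `1 := 0′`. Then `1′ = 0` is the axiom `0′′ = 0`, so `{0, 1}` is a copy of `2_b` exactly when
`0 → 1 = 1` and `1 → 1 = 1`, and `0 ≠ 1`. Specialising the defining identity at `0`, `1` and
`b := 0 → 1` shows that `b = b′′` and `1 = b′′′′`, hence `b = 1`; then `1 → 1 = (1 → b′)′ = 1`.
-/

structure IsImplicationZroupoid {A : Type*} (imp : A → A → A) (z : A) : Prop where
  imp_imp (x y w : A) : imp (imp x y) w = imp (imp (imp (imp w z) x) (imp (imp y w) z)) z
  neg_neg_zero : imp (imp z z) z = z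

namespace IsImplicationZroupoid

variable {A : Type*} {imp : A → A → A} {z : A}

local infixr:60 " ⇒ " => imp
local notation "𝟎" => z
local notation "𝟏" => imp z z
local notation:max x:max "′" => imp x z

theorem one_neg_neg (H : IsImplicationZroupoid imp z) : 𝟏′′ = 𝟏 := by
  rw [H.neg_neg_zero]

theorem neg_imp (H : IsImplicationZroupoid imp z) (x y : A) :
    (x ⇒ y)′ = ((𝟏 ⇒ x) ⇒ y′′)′ :=
  H.imp_imp x y 𝟎

theorem neg_neg_one_imp (H : IsImplicationZroupoid imp z) (x : A) : (𝟏 ⇒ x)′′ = x′′ := by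
  simpa only [H.neg_neg_zero] using (H.neg_imp x 𝟎).symm

theorem imp_imp_one (H : IsImplicationZroupoid imp z) (x y : A) :
    (x ⇒ y) ⇒ 𝟏 = ((𝟎 ⇒ x) ⇒ (y ⇒ 𝟏)′)′ := by
  simpa only [H.neg_neg_zero] using H.imp_imp x y 𝟏

theorem zero_imp (H : IsImplicationZroupoid imp z) (w : A) :
    𝟎 ⇒ w = ((w′ ⇒ 𝟏) ⇒ (𝟎 ⇒ w)′)′ := by
  simpa only [H.neg_neg_zero] using H.imp_imp 𝟏 𝟎 w

theorem one_imp (H : IsImplicationZroupoid imp z) (w : A) : 𝟏 ⇒ w = (w′′ ⇒ (𝟎 ⇒ w)′)′ :=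
  H.imp_imp 𝟎 𝟎 w

theorem neg_neg_one_imp_one (H : IsImplicationZroupoid imp z) : (𝟏 ⇒ 𝟏)′′ = 𝟏 := by
  rw [H.neg_neg_one_imp, H.one_neg_neg]

theorem one_imp_one_imp_one (H : IsImplicationZroupoid imp z) :
    (𝟏 ⇒ 𝟏) ⇒ 𝟏 = (𝟎 ⇒ 𝟏)′′ := by
  rw [H.imp_imp_one, H.neg_imp, H.neg_neg_one_imp_one, H.neg_neg_zero, H.neg_neg_one_imp]

theorem one_imp_one_neg (H : IsImplicationZroupoid imp z) : (𝟏 ⇒ 𝟏)′ = (𝟎 ⇒ 𝟏)′′′ := by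
  rw [H.neg_imp, H.one_neg_neg, H.one_imp_one_imp_one]

theorem zero_imp_one_neg_neg (H : IsImplicationZroupoid imp z) : (𝟎 ⇒ 𝟏)′′ = 𝟎 ⇒ 𝟏 := by
  have hd : (𝟏 ⇒ (𝟎 ⇒ 𝟏)) ⇒ (𝟏 ⇒ 𝟏)′ = (𝟏 ⇒ (𝟎 ⇒ 𝟏))′ := by
    rw [H.imp_imp 𝟏 (𝟎 ⇒ 𝟏) (𝟏 ⇒ 𝟏)′, H.neg_neg_one_imp_one, ← H.imp_imp_one,
      H.one_imp_one_imp_one, H.neg_imp 𝟏 (𝟎 ⇒ 𝟏)]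
  symm
  calc 𝟎 ⇒ 𝟏 = ((𝟎 ⇒ 𝟏) ⇒ (𝟎 ⇒ 𝟏)′)′ := by simpa only [H.neg_neg_zero] using H.zero_imp 𝟏
    _ = ((𝟏 ⇒ (𝟎 ⇒ 𝟏)) ⇒ (𝟏 ⇒ 𝟏)′)′ := by rw [H.neg_imp, H.one_imp_one_neg]
    _ = (𝟎 ⇒ 𝟏)′′ := by rw [hd, H.neg_neg_one_imp]

theorem zero_imp_one (H : IsImplicationZroupoid imp z) : 𝟎 ⇒ 𝟏 = 𝟏 :=
  calc 𝟎 ⇒ 𝟏 = (𝟎 ⇒ 𝟏)′′′′ := by rw [H.zero_imp_one_neg_neg, H.zero_imp_one_neg_neg]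
    _ = 𝟏 := by rw [← H.one_imp_one_neg, H.neg_neg_one_imp_one]

theorem one_imp_one (H : IsImplicationZroupoid imp z) : 𝟏 ⇒ 𝟏 = 𝟏 := by
  rw [H.one_imp, H.zero_imp_one, H.one_neg_neg, H.neg_neg_zero, H.neg_neg_zero]

end IsImplicationZroupoid

theorem stmt_19 {A : Type*} (imp : A → A → A) (z : A)
    (hI : ∀ x y w : A,
      imp (imp x y) w = imp (imp (imp (imp w z) x) (imp (imp y w) z)) z)
    (h0 : imp (imp z z) z = z) :
    (∃ t : A, t ≠ z ∧ imp z z = t ∧ imp z t = t ∧ imp t t = t ∧ imp t z = z)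
      ↔ z ≠ imp z z := by
  have H : IsImplicationZroupoid imp z := ⟨hI, h0⟩
  constructor
  · rintro ⟨t, hne, rfl, -⟩
    exact hne.symm
  · intro hz
    exact ⟨imp z z, hz.symm, rfl, H.zero_imp_one, H.one_imp_one, h0⟩
end
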